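/- arXiv:1103.5883 — 4 statements merged into one kernel-verified Lean document; each statement's English description precedes it below -/
import Mathlib

section
/- Let G ≤ GL₇(𝔽̄_ℓ) be generated by a triple (ḡ₀, ḡ₁, ḡ_∞) with ḡ₀ḡ₁ḡ_∞ = 1 that is linearly rigid and whose GL₇(𝔽̄_ℓ)-conjugacy classes are each stable under the ℓ-power Frobenius map φ_ℓ applied entrywise. Then G is GL₇(𝔽̄_ℓ)-conjugate to a subgroup of GL₇(𝔽_ℓ). -/
/-!
Frobenius stability of the three conjugacy classes says that `(φ g₀, φ g₁, φ g∞)` is again a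
triple with product `1` in the same classes, so rigidity gives one `g` with `φ gᵢ = g⁻¹ gᵢ g`.
By Lang's theorem for `GL_n` over an algebraically closed field, `g = h φ(h)⁻¹`, and then every
`h⁻¹ gᵢ h` is fixed by `φ`.

Lang's theorem is proved through the Frobenius-semilinear map `v ↦ g φ(v)`: its fixed vectors
span. Modulo their span `W`, a nonzero fixed vector is found inside a cyclic subspace
`⟨v, σ v, …, σ^k v⟩`, where being fixed amounts to one polynomial equation `Q(y) = y` with
`Q' = 0`, which has a nonzero solution since `Q - X` is separable of degree at least `2`. It lifts
to a fixed vector outside `W` because `σ - 1` maps `W` onto itself (Artin–Schreier).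
-/

open Matrix Polynomial Submodule

section Polynomial

variable {K : Type*} [Field K]

theorem exists_pow_sub_self_eq [IsAlgClosed K] {ℓ : ℕ} (hℓ : 1 < ℓ) (c : K) :
    ∃ d : K, d ^ ℓ - d = c := by
  have hdeg : 0 < (X ^ ℓ - X - C c : K[X]).natDegree := by
    rw [natDegree_sub_C, FiniteField.X_pow_card_sub_X_natDegree_eq K hℓ]; omega
  obtain ⟨d, hd⟩ := IsAlgClosed.exists_root _ (natDegree_pos_iff_degree_pos.mp hdeg).ne'
  exact ⟨d, by simpa [sub_eq_zero] using hd⟩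

theorem exists_ne_eval_eq_self [IsAlgClosed K] {p : K[X]} (hp : derivative p = 0)
    (hdeg : 2 ≤ p.natDegree) (a : K) : ∃ y ≠ a, p.eval y = y := by
  classical
  have hsep : (p - X).Separable := by
    rw [separable_def, derivative_sub, hp, derivative_X, zero_sub]
    exact isCoprime_one_right.neg_right
  have hdegX : (p - X).natDegree = p.natDegree :=
    natDegree_sub_eq_left_of_natDegree_lt (by rw [natDegree_X]; omega)
  have hcard : 1 < (p - X).roots.toFinset.card := by
    rw [Multiset.toFinset_card_of_nodup (nodup_roots hsep), IsAlgClosed.card_roots_eq_natDegree,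
      hdegX]
    omega
  obtain ⟨y, hy, hya⟩ := Finset.exists_mem_ne hcard a
  refine ⟨y, hya, ?_⟩
  have := (mem_roots hsep.ne_zero).mp (Multiset.mem_toFinset.mp hy)
  simpa [sub_eq_zero] using this

/-- If `frobeniusRecPoly ℓ a m` fixes `y`, the values `z i := (frobeniusRecPoly ℓ a i).eval y`
solve the recurrence `z (i + 1) = z i ^ ℓ + a i * z m ^ ℓ` of
`apply_sum_smul_eq_self_of_recurrence`. -/
noncomputable def frobeniusRecPoly (ℓ : ℕ) (a : ℕ → K) : ℕ → K[X]
  | 0 => 0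
  | i + 1 => frobeniusRecPoly ℓ a i ^ ℓ + C (a i) * X ^ ℓ

variable {ℓ : ℕ}

theorem derivative_frobeniusRecPoly [CharP K ℓ] (a : ℕ → K) (i : ℕ) :
    derivative (frobeniusRecPoly ℓ a i) = 0 := by
  induction i with
  | zero => simp [frobeniusRecPoly]
  | succ i ih => simp [frobeniusRecPoly, derivative_pow, ih]

theorem natDegree_frobeniusRecPoly_succ (hℓ : 1 < ℓ) (a : ℕ → K) (ha : a 0 ≠ 0) (i : ℕ) :
    (frobeniusRecPoly ℓ a (i + 1)).natDegree = ℓ ^ (i + 1) := by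
  induction i with
  | zero => simp [frobeniusRecPoly, zero_pow (by omega : ℓ ≠ 0), natDegree_C_mul_X_pow ℓ _ ha]
  | succ i ih =>
    have hpow : (frobeniusRecPoly ℓ a (i + 1) ^ ℓ).natDegree = ℓ ^ (i + 2) := by
      rw [natDegree_pow, ih, pow_succ' ℓ (i + 1)]
    have hlow : (C (a (i + 1)) * X ^ ℓ).natDegree < ℓ ^ (i + 2) :=
      (natDegree_C_mul_X_pow_le _ _).trans_lt
        (by simpa using Nat.pow_lt_pow_right hℓ (by omega : 1 < i + 2))
    rw [frobeniusRecPoly, natDegree_add_eq_left_of_natDegree_lt (hpow ▸ hlow), hpow]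

theorem exists_ne_zero_eval_frobeniusRecPoly_eq [IsAlgClosed K] [Fact ℓ.Prime] [CharP K ℓ]
    (a : ℕ → K) (ha : a 0 ≠ 0) (k : ℕ) : ∃ y ≠ 0, (frobeniusRecPoly ℓ a (k + 1)).eval y = y := by
  have hℓ := (Fact.out : ℓ.Prime).one_lt
  refine exists_ne_eval_eq_self (derivative_frobeniusRecPoly a _) ?_ 0
  rw [natDegree_frobeniusRecPoly_succ hℓ a ha]
  exact hℓ.trans_le (Nat.le_self_pow (by omega) ℓ)

end Polynomial

theorem exists_mem_span_image_range {K V : Type*} [DivisionRing K] [AddCommGroup V] [Module K V]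
    [IsNoetherian K V] (e : ℕ → V) : ∃ m, e m ∈ span K (e '' Finset.range m) := by
  let U : ℕ →o Submodule K V :=
    ⟨fun m => span K (e '' Finset.range m), fun m n hmn => span_mono <| Set.image_mono <| by
      simpa using Finset.range_mono hmn⟩
  obtain ⟨m, hm⟩ := monotone_stabilizes_iff_noetherian.mpr inferInstance U
  exact ⟨m, (hm (m + 1) m.le_succ).ge (subset_span ⟨m, by simp, rfl⟩)⟩

theorem mem_span_of_sum_smul_mem {K V : Type*} [DivisionRing K] [AddCommGroup V] [Module K V]
    {e : ℕ → V} {c : ℕ → K} {k : ℕ} (hc : c k ≠ 0)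
    (hsum : ∑ i ∈ Finset.range (k + 1), c i • e i ∈ span K (e '' Finset.range k)) :
    e k ∈ span K (e '' Finset.range k) := by
  rw [Finset.sum_range_succ] at hsum
  have hlow : ∑ i ∈ Finset.range k, c i • e i ∈ span K (e '' Finset.range k) :=
    (mem_span_image_finset_iff_exists_fun' K).mpr ⟨c, rfl⟩
  exact (smul_mem_iff _ hc).mp <| by simpa using sub_mem hsum hlow

instance {R : Type*} [CommSemiring R] (p : ℕ) [ExpChar R p] [PerfectRing R p] :
    RingHomSurjective (frobenius R p) :=
  ⟨surjective_frobenius R p⟩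

section Semilinear

variable {K V : Type*} [Field K] {ℓ : ℕ} [Fact ℓ.Prime] [CharP K ℓ] [AddCommGroup V] [Module K V]
  {σ : V →ₛₗ[frobenius K ℓ] V}

theorem apply_sum_smul_eq_self_of_recurrence {e : ℕ → V} (he : ∀ i, σ (e i) = e (i + 1))
    {a z : ℕ → K} {m : ℕ} (ha : e m = ∑ i ∈ Finset.range m, a i • e i) (hz0 : z 0 = 0)
    (hz : ∀ i, z (i + 1) = z i ^ ℓ + a i * z m ^ ℓ) :
    σ (∑ i ∈ Finset.range m, z (i + 1) • e i) = ∑ i ∈ Finset.range m, z (i + 1) • e i := by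
  have hℓ : ℓ ≠ 0 := (Fact.out : ℓ.Prime).ne_zero
  calc σ (∑ i ∈ Finset.range m, z (i + 1) • e i)
      = ∑ i ∈ Finset.range m, z (i + 1) ^ ℓ • e (i + 1) := by
        simp [map_smulₛₗ, he, frobenius_def]
    _ = ∑ i ∈ Finset.range (m + 1), z i ^ ℓ • e i := by
      rw [Finset.sum_range_succ', hz0, zero_pow hℓ, zero_smul, add_zero]
    _ = ∑ i ∈ Finset.range m, (z i ^ ℓ + a i * z m ^ ℓ) • e i := by
      rw [Finset.sum_range_succ, ha, Finset.smul_sum, ← Finset.sum_add_distrib]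
      refine Finset.sum_congr rfl fun i _ => ?_
      rw [add_smul, mul_comm, mul_smul]
    _ = ∑ i ∈ Finset.range m, z (i + 1) • e i := by simp_rw [hz]

theorem coeff_zero_ne_zero_of_notMem_span [PerfectRing K ℓ] (hσ : Function.Injective σ)
    {e : ℕ → V} (he : ∀ i, σ (e i) = e (i + 1)) {a : ℕ → K} {k : ℕ}
    (ha : e (k + 1) = ∑ i ∈ Finset.range (k + 1), a i • e i)
    (hk : e k ∉ span K (e '' Finset.range k)) : a 0 ≠ 0 := by
  intro h0
  choose b hb using fun i => surjective_frobenius K ℓ (a (i + 1))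
  have hek : e k = ∑ i ∈ Finset.range k, b i • e i := hσ <| by
    rw [he, ha, Finset.sum_range_succ', h0, zero_smul, add_zero, map_sum]
    simp [map_smulₛₗ, he, hb]
  exact hk (hek ▸ (mem_span_image_finset_iff_exists_fun' K).mpr ⟨b, rfl⟩)

theorem exists_ne_zero_apply_eq_self [IsAlgClosed K] [FiniteDimensional K V] [Nontrivial V]
    (hσ : Function.Injective σ) : ∃ v ≠ 0, σ v = v := by
  classical
  obtain ⟨v, hv⟩ := exists_ne (0 : V)
  set e : ℕ → V := fun i => σ^[i] v
  have he : ∀ i, σ (e i) = e (i + 1) := fun i => (Function.iterate_succ_apply' σ i v).symm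
  have hex := exists_mem_span_image_range (K := K) e
  obtain ⟨k, hk⟩ : ∃ k, Nat.find hex = k + 1 :=
    Nat.exists_eq_succ_of_ne_zero fun h0 => hv <| by
      have h := Nat.find_spec hex
      rw [h0] at h
      simpa [e] using h
  have hmin : e k ∉ span K (e '' Finset.range k) := Nat.find_min hex (by omega)
  obtain ⟨a, ha⟩ := (mem_span_image_finset_iff_exists_fun' K).mp (hk ▸ Nat.find_spec hex)
  obtain ⟨y, hy, hQy⟩ := exists_ne_zero_eval_frobeniusRecPoly_eq a
    (coeff_zero_ne_zero_of_notMem_span hσ he ha.symm hmin) k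
  set z : ℕ → K := fun i => (frobeniusRecPoly ℓ a i).eval y
  refine ⟨∑ i ∈ Finset.range (k + 1), z (i + 1) • e i, fun h0 => hmin ?_,
    apply_sum_smul_eq_self_of_recurrence he ha.symm (by simp [z, frobeniusRecPoly])
      (fun i => by simp [z, frobeniusRecPoly, hQy])⟩
  exact mem_span_of_sum_smul_mem (c := fun i => z (i + 1)) (by simpa [z, hQy] using hy)
    (h0 ▸ zero_mem _)

variable (σ)

theorem map_span_setOf_apply_eq_self [PerfectRing K ℓ] :
    (span K {v | σ v = v}).map σ = span K {v | σ v = v} := by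
  rw [map_span, Set.image_congr (s := {v | σ v = v}) (g := id) fun v hv => hv, Set.image_id]

theorem exists_apply_sub_self_eq_of_mem_span [IsAlgClosed K] {w : V}
    (hw : w ∈ span K {v | σ v = v}) : ∃ u ∈ span K {v | σ v = v}, σ u - u = w := by
  replace hw : w ∈ (span K {v | σ v = v}).toAddSubmonoid := hw
  rw [span_eq_closure] at hw
  induction hw using AddSubmonoid.closure_induction with
  | mem x hx =>
    obtain ⟨c, -, f, hf, rfl⟩ := hx
    obtain ⟨d, hd⟩ := exists_pow_sub_self_eq (Fact.out : ℓ.Prime).one_lt c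
    exact ⟨d • f, smul_mem _ _ (subset_span hf), by
      rw [map_smulₛₗ, show σ f = f from hf, frobenius_def, ← sub_smul, hd]⟩
  | zero => exact ⟨0, zero_mem _, by simp⟩
  | add x y _ _ hx hy =>
    obtain ⟨u, hu, rfl⟩ := hx
    obtain ⟨u', hu', rfl⟩ := hy
    exact ⟨u + u', add_mem hu hu', by rw [map_add]; abel⟩

theorem span_setOf_apply_eq_self_eq_top [IsAlgClosed K] [FiniteDimensional K V]
    (hσ : Function.Injective σ) : span K {v | σ v = v} = ⊤ := by
  set W := span K {v | σ v = v}
  have hmap : W.map σ = W := map_span_setOf_apply_eq_self σ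
  have hWσ : W ≤ W.comap σ := fun w hw => show σ w ∈ W from hmap ▸ mem_map_of_mem hw
  have hσW : W.comap σ ≤ W := fun v hv => by
    obtain ⟨w, hw, hwv⟩ := hmap.symm ▸ hv
    exact hσ hwv ▸ hw
  by_contra hW
  have : Nontrivial (V ⧸ W) := Quotient.nontrivial_iff.mpr hW
  have hσ' : Function.Injective (W.mapQ W σ hWσ) := by
    rw [← LinearMap.ker_eq_bot, ker_mapQ, le_antisymm hσW hWσ, mkQ_map_self]
  obtain ⟨x, hx0, hx⟩ := exists_ne_zero_apply_eq_self hσ'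
  obtain ⟨v, rfl⟩ := W.mkQ_surjective x
  rw [mkQ_apply] at hx0
  rw [mkQ_apply, mapQ_apply] at hx
  have hvW : σ v - v ∈ W := (Submodule.Quotient.eq W).mp hx
  obtain ⟨u, huW, hu⟩ := exists_apply_sub_self_eq_of_mem_span σ (neg_mem hvW)
  have hfix : v + u ∈ W := subset_span (show σ (v + u) = v + u by
    rw [map_add, ← sub_eq_zero]; linear_combination (norm := abel) hu)
  exact hx0 ((Submodule.Quotient.mk_eq_zero W).mpr (by simpa using sub_mem hfix huW))

end Semilinear

theorem Module.Basis.exists_forall_mem_of_span_eq_top {ι K V : Type*} [Fintype ι] [Field K]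
    [AddCommGroup V] [Module K V] (b₀ : Module.Basis ι K V) {s : Set V} (hs : span K s = ⊤) :
    ∃ b : Module.Basis ι K V, ∀ j, b j ∈ s := by
  let b := Module.Basis.ofSpan hs.ge
  refine ⟨b.reindex (b.indexEquiv b₀), fun j => Module.Basis.ofSpan_subset hs.ge ?_⟩
  rw [Module.Basis.reindex_apply]
  exact Set.mem_range_self _

section GeneralLinearGroup

variable {K : Type*} [Field K] (ℓ : ℕ) [Fact ℓ.Prime] [CharP K ℓ] {n : Type*} [Fintype n]

noncomputable def Matrix.frobeniusMulVec (A : Matrix n n K) :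
    (n → K) →ₛₗ[frobenius K ℓ] (n → K) where
  toFun v := A *ᵥ (frobenius K ℓ ∘ v)
  map_add' u v := by
    rw [← mulVec_add]; congr 1; ext; simp
  map_smul' c v := by
    rw [← mulVec_smul]; congr 1; ext; simp

variable [DecidableEq n]

theorem Matrix.GeneralLinearGroup.exists_eq_mul_map_frobenius_inv [IsAlgClosed K] (g : GL n K) :
    ∃ h : GL n K, g = h * (map (frobenius K ℓ) h)⁻¹ := by
  have hinj : Function.Injective (frobeniusMulVec ℓ (g : Matrix n n K)) := fun u v huv =>
    (frobenius_inj K ℓ).comp_left (mulVec_injective_iff_isUnit.mpr g.isUnit huv)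
  obtain ⟨b, hb⟩ := (Pi.basisFun K n).exists_forall_mem_of_span_eq_top
    (span_setOf_apply_eq_self_eq_top _ hinj)
  let h := mk'' ((Pi.basisFun K n).toMatrix b) <| by
    rw [← Module.Basis.det_apply]; exact (Pi.basisFun K n).isUnit_det b
  refine ⟨h, eq_mul_inv_of_mul_eq (ext fun i j => ?_)⟩
  have := congrFun (hb j) i
  simpa [h, mul_apply, frobeniusMulVec, mulVec, dotProduct, Module.Basis.toMatrix_apply] using this

end GeneralLinearGroup

theorem MonoidHom.map_conj_eq_self {G : Type*} [Group G] (Φ : G →* G) {g h x : G}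
    (hx : Φ x = g⁻¹ * x * g) (hg : g = h * (Φ h)⁻¹) : Φ (h⁻¹ * x * h) = h⁻¹ * x * h := by
  subst hg
  simp only [map_mul, map_inv, hx]
  group

/-- If a triple `(ḡ₀, ḡ₁, ḡ_∞)` in `GL₇(𝔽̄_ℓ)` with product `1` is
linearly rigid and each of its `GL₇(𝔽̄_ℓ)`-conjugacy classes is stable under the
entrywise `ℓ`-power Frobenius, then the subgroup generated by the triple is
`GL₇(𝔽̄_ℓ)`-conjugate to a subgroup of `GL₇(𝔽_ℓ)`, i.e. one can simultaneously
conjugate the generators so that all entries are fixed by `x ↦ x^ℓ`. -/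
theorem rigid_frobenius_stable_descends_to_prime_field
    (ℓ : ℕ) [Fact ℓ.Prime]
    (K : Type*) [Field K] [IsAlgClosed K] [CharP K ℓ]
    (g₀ g₁ gInf : GL (Fin 7) K) (hprod : g₀ * g₁ * gInf = 1)
    (hrigid : ∀ h₀ h₁ hInf : GL (Fin 7) K, h₀ * h₁ * hInf = 1 →
      IsConj g₀ h₀ → IsConj g₁ h₁ → IsConj gInf hInf →
      ∃ g : GL (Fin 7) K, h₀ = g⁻¹ * g₀ * g ∧ h₁ = g⁻¹ * g₁ * g ∧ hInf = g⁻¹ * gInf * g)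
    (hstab : ∀ i ∈ ({g₀, g₁, gInf} : Set (GL (Fin 7) K)),
      ∃ c : GL (Fin 7) K,
        (i : Matrix (Fin 7) (Fin 7) K).map (fun x => x ^ ℓ)
          = ((c⁻¹ * i * c : GL (Fin 7) K) : Matrix (Fin 7) (Fin 7) K)) :
    ∃ P : GL (Fin 7) K, ∀ i ∈ ({g₀, g₁, gInf} : Set (GL (Fin 7) K)),
      ∀ a b : Fin 7,
        ((P⁻¹ * i * P : GL (Fin 7) K) : Matrix (Fin 7) (Fin 7) K) a b ^ ℓ
          = ((P⁻¹ * i * P : GL (Fin 7) K) : Matrix (Fin 7) (Fin 7) K) a b := by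
  set Φ := GeneralLinearGroup.map (n := Fin 7) (frobenius K ℓ)
  have hconj : ∀ i ∈ ({g₀, g₁, gInf} : Set (GL (Fin 7) K)), IsConj i (Φ i) := fun i hi => by
    obtain ⟨c, hc⟩ := hstab i hi
    have hΦi : Φ i = c⁻¹ * i * c := Units.ext <| by
      rw [← hc]; ext a b; exact frobenius_def ℓ _
    exact isConj_iff.mpr ⟨c⁻¹, by rw [hΦi, inv_inv]⟩
  obtain ⟨g, hg₀, hg₁, hgInf⟩ := hrigid (Φ g₀) (Φ g₁) (Φ gInf)
    (by rw [← map_mul, ← map_mul, hprod, map_one])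
    (hconj g₀ (by simp)) (hconj g₁ (by simp)) (hconj gInf (by simp))
  obtain ⟨P, hP⟩ := GeneralLinearGroup.exists_eq_mul_map_frobenius_inv ℓ g
  refine ⟨P, fun i hi a b => ?_⟩
  have hΦi : Φ i = g⁻¹ * i * g := by
    rcases hi with rfl | rfl | rfl
    exacts [hg₀, hg₁, hgInf]
  have hfix := congrArg (fun y : GL (Fin 7) K => (y : Matrix (Fin 7) (Fin 7) K) a b)
    (Φ.map_conj_eq_self hΦi hP)
  simpa only [Φ, GeneralLinearGroup.map_apply, frobenius_def] using hfix
end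

section
/- Let ℓ ≠ 7 be a prime with ζ₇ ∈ 𝔽̄_ℓ a primitive 7th root of unity, and let g_∞ act diagonally on V = 𝔽̄_ℓ⁷ with basis v₁,...,v₇, g_∞·vᵢ = ζ₇ⁱvᵢ (so v₇ has eigenvalue 1). Let h act by the 6-cycle permutation v₁↦v₃↦v₂↦v₆↦v₄↦v₅↦v₁ (fixing v₇, up to diagonal twist). Then V₂ = span(v₁,...,v₆) is an irreducible module for the group generated by g_∞ and h. -/
/-!
The eigenvalues `ζ, ζ², …, ζ⁷` of the diagonal matrix `g` are pairwise distinct, so evaluating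
Lagrange basis polynomials at `g` shows that a `g`-stable subspace contains the coordinate
components `vᵢ eᵢ` of each of its vectors. A nonzero `g`-stable `U ≤ V₂` therefore contains some
`eᵢ` with `i ≠ 6`, and since `h` maps `e_{σ i}` to a nonzero multiple of `eᵢ` with `σ` a 6-cycle on
the remaining indices, an `h`-stable `U` contains every `eᵢ`, `i ≠ 6`, hence all of `V₂`.
-/

open Matrix Polynomial

theorem IsPrimitiveRoot.injective_pow_succ {M : Type*} [CommMonoid M] {ζ : M} {k : ℕ}
    (hζ : IsPrimitiveRoot ζ k) : Function.Injective fun i : Fin k => ζ ^ ((i : ℕ) + 1) := by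
  intro i j hij
  simp only [pow_succ, (hζ.isUnit i.pos.ne').mul_left_inj] at hij
  exact Fin.ext (hζ.pow_inj i.isLt j.isLt hij)

theorem Matrix.permMatrix_mul_diagonal_mulVec_single {ι R : Type*} [Fintype ι] [DecidableEq ι]
    [CommRing R] (σ : Equiv.Perm ι) (d : ι → R) (i : ι) (a : R) :
    (σ.permMatrix R * diagonal d) *ᵥ Pi.single (σ i) a = Pi.single i (d (σ i) * a) := by
  rw [← mulVec_mulVec, permMatrix_mulVec]
  ext k
  simp [Pi.single_apply, σ.injective.eq_iff, mul_comm]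

theorem Equiv.Perm.of_pow_apply {α : Type*} {σ : Equiv.Perm α} {P : α → Prop}
    (hP : ∀ x, P (σ x) → P x) (n : ℕ) {x : α} (h : P ((σ ^ n) x)) : P x := by
  induction n generalizing x with
  | zero => simpa using h
  | succ n ih => exact hP x (ih (by rwa [pow_succ, Equiv.Perm.mul_apply] at h))

theorem Equiv.Perm.IsCycle.of_backward_invariant {α : Type*} [Finite α] {σ : Equiv.Perm α}
    (hσ : σ.IsCycle) {P : α → Prop} (hP : ∀ x, P (σ x) → P x) {x y : α} (hx : σ x ≠ x)
    (hy : σ y ≠ y) (h : P x) : P y := by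
  obtain ⟨n, rfl⟩ := (hσ.sameCycle hy hx).exists_nat_pow_eq
  exact σ.of_pow_apply hP n h

namespace Submodule

variable {ι K : Type*} [DecidableEq ι]

theorem diagonal_eval_mulVec_mem [Fintype ι] [CommSemiring K] {U : Submodule K (ι → K)} {c : ι → K}
    (hU : ∀ v ∈ U, diagonal c *ᵥ v ∈ U) (p : K[X]) {v : ι → K} (hv : v ∈ U) :
    diagonal (fun i => p.eval (c i)) *ᵥ v ∈ U := by
  induction p using Polynomial.induction_on generalizing v with
  | C a =>
    convert U.smul_mem a hv using 1
    ext
    simp [mulVec_diagonal]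
  | add p q hp hq =>
    convert U.add_mem (hp hv) (hq hv) using 1
    ext
    simp [mulVec_diagonal, add_mul]
  | monomial n a ih =>
    convert ih (hU v hv) using 1
    ext
    simp only [mulVec_diagonal, eval_mul, eval_C, eval_pow, eval_X, pow_succ]
    ring

theorem single_mem_of_diagonal_mulVec_mem [Fintype ι] [Field K] {U : Submodule K (ι → K)} {c : ι → K}
    (hc : Function.Injective c) (hU : ∀ v ∈ U, diagonal c *ᵥ v ∈ U) {v : ι → K} (hv : v ∈ U)
    (i : ι) : Pi.single i (v i) ∈ U := by
  convert U.diagonal_eval_mulVec_mem hU (Lagrange.basis Finset.univ c i) hv using 1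
  ext j
  rcases eq_or_ne j i with rfl | hji
  · simp [mulVec_diagonal, Lagrange.eval_basis_self hc.injOn (Finset.mem_univ j)]
  · simp [mulVec_diagonal, hji, Lagrange.eval_basis_of_ne hji.symm (Finset.mem_univ j)]

theorem single_one_mem_of_single_mem [Field K] {U : Submodule K (ι → K)} {i : ι} {a : K}
    (ha : a ≠ 0) (h : Pi.single i a ∈ U) : Pi.single i 1 ∈ U := by
  simpa [← Pi.single_smul', ha] using U.smul_mem a⁻¹ h

theorem single_one_mem_of_permMatrix_mul_diagonal [Fintype ι] [Field K] {U : Submodule K (ι → K)}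
    {σ : Equiv.Perm ι} {d : ι → K} (hd : ∀ i, d i ≠ 0)
    (hU : ∀ v ∈ U, (σ.permMatrix K * diagonal d) *ᵥ v ∈ U) {i : ι}
    (h : Pi.single (σ i) 1 ∈ U) : Pi.single i 1 ∈ U := by
  have := hU _ h
  rw [permMatrix_mul_diagonal_mulVec_single, mul_one] at this
  exact single_one_mem_of_single_mem (hd (σ i)) this

theorem mem_of_single_one_mem [Fintype ι] [Semiring K] {U : Submodule K (ι → K)} {w : ι → K}
    (h : ∀ i, w i ≠ 0 → Pi.single i 1 ∈ U) : w ∈ U := by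
  rw [← Finset.univ_sum_single w]
  refine U.sum_mem fun i _ => ?_
  by_cases hi : w i = 0
  · simp [hi]
  · simpa [← Pi.single_smul'] using U.smul_mem (w i) (h i hi)

end Submodule

theorem V2_irreducible_general
    (K : Type*) [Field K]
    (ζ : K) (hζ : IsPrimitiveRoot ζ 7)
    (g : Matrix (Fin 7) (Fin 7) K)
    (hg : g = Matrix.diagonal fun i : Fin 7 => ζ ^ ((i : ℕ) + 1))
    (σ : Equiv.Perm (Fin 7))
    (hσ : σ 0 = 2 ∧ σ 2 = 1 ∧ σ 1 = 5 ∧ σ 5 = 3 ∧ σ 3 = 4 ∧ σ 4 = 0 ∧ σ 6 = 6)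
    (d : Fin 7 → K) (hd : ∀ i, d i ≠ 0)
    (h : Matrix (Fin 7) (Fin 7) K)
    (hh : h = (σ.permMatrix K) * Matrix.diagonal d)
    (V₂ : Submodule K (Fin 7 → K)) (hV₂ : ∀ v : Fin 7 → K, v ∈ V₂ ↔ v 6 = 0) :
    ∀ U : Submodule K (Fin 7 → K), U ≤ V₂ →
      (∀ v ∈ U, g.mulVec v ∈ U) → (∀ v ∈ U, h.mulVec v ∈ U) →
      U = ⊥ ∨ U = V₂ := by
  intro U hUV hgU hhU
  subst hg hh
  have hσ_eq : σ = List.formPerm [0, 2, 1, 5, 3, 4] := by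
    obtain ⟨h0, h2, h1, h5, h3, h4, h6⟩ := hσ
    ext k
    fin_cases k <;> simp [h0, h1, h2, h3, h4, h5, h6] <;> decide
  have hσ_cycle : σ.IsCycle := hσ_eq ▸ List.isCycle_formPerm (by decide) (by decide)
  have hσ_moves : ∀ i, i ≠ 6 → σ i ≠ i := by rw [hσ_eq]; decide
  rcases eq_or_ne U ⊥ with hU | hU
  · exact .inl hU
  obtain ⟨v, hvU, hv⟩ := U.ne_bot_iff.mp hU
  obtain ⟨i, hi⟩ := Function.ne_iff.mp hv
  have hi6 : i ≠ 6 := fun h6 => hi (h6 ▸ (hV₂ v).mp (hUV hvU))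
  have hei : Pi.single i 1 ∈ U := U.single_one_mem_of_single_mem hi
    (U.single_mem_of_diagonal_mulVec_mem hζ.injective_pow_succ hgU hvU i)
  refine .inr (le_antisymm hUV fun w hw => U.mem_of_single_one_mem fun j hj => ?_)
  have hj6 : j ≠ 6 := fun h6 => hj (h6 ▸ (hV₂ w).mp hw)
  exact hσ_cycle.of_backward_invariant (P := fun k => Pi.single k (1 : K) ∈ U)
    (fun _ => U.single_one_mem_of_permMatrix_mul_diagonal hd hhU)
    (hσ_moves i hi6) (hσ_moves j hj6) hei

/-- Let `ℓ ≠ 7`, `ζ₇ ∈ 𝔽̄_ℓ` a primitive 7th root of unity,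
`g_∞` acting diagonally with `g_∞ vᵢ = ζ₇ⁱ vᵢ` (`v₇` of eigenvalue 1), and `h`
acting (up to diagonal twist) by the 6-cycle `v₁↦v₃↦v₂↦v₆↦v₄↦v₅↦v₁`, fixing
`v₇`. Then `V₂ = span(v₁,...,v₆)` is irreducible for the group generated by
`g_∞` and `h`. -/
theorem V2_irreducible
    (ℓ : ℕ) [Fact ℓ.Prime] (h7 : ℓ ≠ 7)
    (K : Type*) [Field K] [IsAlgClosed K] [CharP K ℓ]
    (ζ : K) (hζ : IsPrimitiveRoot ζ 7)
    (g : Matrix (Fin 7) (Fin 7) K)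
    (hg : g = Matrix.diagonal fun i : Fin 7 => ζ ^ ((i : ℕ) + 1))
    (σ : Equiv.Perm (Fin 7))
    (hσ : σ 0 = 2 ∧ σ 2 = 1 ∧ σ 1 = 5 ∧ σ 5 = 3 ∧ σ 3 = 4 ∧ σ 4 = 0 ∧ σ 6 = 6)
    (d : Fin 7 → K) (hd : ∀ i, d i ≠ 0)
    (h : Matrix (Fin 7) (Fin 7) K)
    (hh : h = (σ.permMatrix K) * Matrix.diagonal d)
    (V₂ : Submodule K (Fin 7 → K)) (hV₂ : ∀ v : Fin 7 → K, v ∈ V₂ ↔ v 6 = 0) :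
    ∀ U : Submodule K (Fin 7 → K), U ≤ V₂ →
      (∀ v ∈ U, g.mulVec v ∈ U) → (∀ v ∈ U, h.mulVec v ∈ U) →
      U = ⊥ ∨ U = V₂ :=
  V2_irreducible_general K ζ hζ g hg σ hσ d hd h hh V₂ hV₂
end

section
/- In the setting of the previous lemma, let H' = ⟨g_∞, h⟩ ≤ GL(V), V = 𝔽̄_ℓ⁷. Then V = V₁ ⊕ V₂ with V₁ = Eig(g_∞, 1) one-dimensional and V₂ = ⊕_{i=1}^{6} Eig(g_∞, ζ₇ⁱ), both H'-invariant, and every nonzero proper H'-submodule of V equals V₁ or V₂. -/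
open Matrix Equiv Function

/-!
The eigenvalues `ζ, …, ζ⁷` of `g` are distinct, so a `g`-invariant subspace `U` is the coordinate
subspace spanned by the standard basis vectors it contains: evaluating at `g` the Lagrange
polynomial of the node `ζ^(i+1)` projects onto the `i`-th coordinate. The monomial matrix `h`
carries the `i`-th coordinate line onto the `σ⁻¹ i`-th one, so the coordinates of `U` form a union
of cycles of `σ`, i.e. `∅`, `{6}`, `{0, …, 5}` or everything.
-/

namespace Submodule

variable {ι K : Type*} [Field K]

theorem mem_pi_bot_iff {S : Set ι} {v : ι → K} :
    v ∈ pi S (fun _ => (⊥ : Submodule K K)) ↔ ∀ i ∈ S, v i = 0 := by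
  simp only [mem_pi, mem_bot]

theorem isCompl_pi_bot_compl (S : Set ι) :
    IsCompl (pi Sᶜ (fun _ => (⊥ : Submodule K K))) (pi S fun _ => ⊥) := by
  classical
  constructor
  · rw [disjoint_iff_inf_le]
    rintro v ⟨hvc, hv⟩
    ext i
    by_cases hi : i ∈ S
    · exact mem_pi_bot_iff.1 hv i hi
    · exact mem_pi_bot_iff.1 hvc i hi
  · rw [codisjoint_iff_le_sup]
    intro v _
    rw [← S.indicator_self_add_compl v]
    refine add_mem_sup (mem_pi_bot_iff.2 fun i hi => ?_) (mem_pi_bot_iff.2 fun i hi => ?_)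
    · exact S.indicator_of_notMem hi v
    · exact Sᶜ.indicator_of_notMem (Set.notMem_compl_iff.2 hi) v

theorem smul_mem_pi_bot {S : Set ι} (D : ι → K) {v : ι → K}
    (hv : v ∈ pi S fun _ => (⊥ : Submodule K K)) : D • v ∈ pi S fun _ => (⊥ : Submodule K K) :=
  mem_pi_bot_iff.2 fun i hi => by simp [mem_pi_bot_iff.1 hv i hi]

theorem comp_mem_pi_bot {S : Set ι} {σ : Perm ι} (hσ : Set.MapsTo σ S S) {v : ι → K}
    (hv : v ∈ pi S fun _ => (⊥ : Submodule K K)) : v ∘ σ ∈ pi S fun _ => (⊥ : Submodule K K) :=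
  mem_pi_bot_iff.2 fun i hi => mem_pi_bot_iff.1 hv (σ i) (hσ hi)

variable [DecidableEq ι] {U : Submodule K (ι → K)}

theorem single_mem_of_forall_smul_mem [Fintype ι] {D : ι → K} (hD : Injective D)
    (hU : ∀ v ∈ U, D • v ∈ U) {v : ι → K} (hv : v ∈ U) (i : ι) : Pi.single i (v i) ∈ U := by
  have hproj := Polynomial.aeval_apply_smul_mem_of_le_comap' hv
    (Lagrange.basis Finset.univ D i) D fun w hw => hU w hw
  convert hproj using 1
  ext j
  rw [smul_eq_mul, Pi.mul_apply, Polynomial.aeval_pi_apply₂, Polynomial.coe_aeval_eq_eval]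
  rcases eq_or_ne j i with rfl | hji
  · rw [Lagrange.eval_basis_self hD.injOn (Finset.mem_univ _)]; simp
  · rw [Lagrange.eval_basis_of_ne hji.symm (Finset.mem_univ _)]; simp [hji]

theorem eq_pi_bot_of_forall_smul_mem [Fintype ι] {D : ι → K} (hD : Injective D)
    (hU : ∀ v ∈ U, D • v ∈ U) :
    U = pi {i | Pi.single i (1 : K) ∉ U} fun _ => ⊥ := by
  ext v
  rw [mem_pi_bot_iff]
  constructor
  · intro hv i hi
    by_contra hvi
    apply hi
    simpa [← Pi.single_smul', hvi] using
      U.smul_mem (v i)⁻¹ (single_mem_of_forall_smul_mem hD hU hv i)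
  · intro hv
    rw [← Finset.univ_sum_single v]
    refine sum_mem fun i _ => ?_
    by_cases hi : Pi.single i (1 : K) ∈ U
    · simpa [← Pi.single_smul'] using U.smul_mem (v i) hi
    · simp [hv i hi]

theorem single_mem_of_sameCycle [Finite ι] {σ : Perm ι} {d : ι → K} (hd : ∀ i, d i ≠ 0)
    (hU : ∀ v ∈ U, (d • v) ∘ σ ∈ U) {i j : ι} (hij : σ.SameCycle i j)
    (hi : Pi.single i (1 : K) ∈ U) : Pi.single j (1 : K) ∈ U := by
  have step : ∀ k, Pi.single k (1 : K) ∈ U → Pi.single (σ⁻¹ k) (1 : K) ∈ U := by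
    intro k hk
    have h := U.smul_mem (d k)⁻¹ (hU _ hk)
    convert h using 1
    ext m
    simp only [Pi.single_apply, Perm.inv_def, eq_symm_apply]
    split_ifs with hmk <;> simp [hmk, hd k]
  obtain ⟨n, rfl⟩ := (Perm.sameCycle_inv.2 hij).exists_nat_pow_eq
  clear hij
  induction n with
  | zero => exact hi
  | succ n ih => simpa only [pow_succ', Perm.mul_apply] using step _ ih

end Submodule

theorem Set.eq_empty_or_singleton_or_compl_singleton_or_univ {α : Type*} {S : Set α} (a : α)
    (hS : ∀ i j, i ≠ a → j ≠ a → i ∈ S → j ∈ S) :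
    S = ∅ ∨ S = {a} ∨ S = {a}ᶜ ∨ S = Set.univ := by
  by_cases ha : a ∈ S <;> by_cases hne : ∃ i ∈ S, i ≠ a
  · obtain ⟨i, hi, hia⟩ := hne
    refine .inr (.inr (.inr (Set.eq_univ_of_forall fun j => ?_)))
    rcases eq_or_ne j a with rfl | hja
    exacts [ha, hS i j hia hja hi]
  · push Not at hne
    exact .inr (.inl (Set.eq_singleton_iff_unique_mem.2 ⟨ha, hne⟩))
  · obtain ⟨i, hi, hia⟩ := hne
    refine .inr (.inr (.inl (Set.ext fun j => ⟨fun hj hja => ha (hja ▸ hj), fun hja => ?_⟩)))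
    exact hS i j hia hja hi
  · push Not at hne
    exact .inl (Set.eq_empty_of_forall_notMem fun i hi => ha (hne i hi ▸ hi))

theorem sameCycle_of_ne_six {σ : Perm (Fin 7)} (h0 : σ 0 = 2) (h2 : σ 2 = 1) (h1 : σ 1 = 5)
    (h5 : σ 5 = 3) (h3 : σ 3 = 4) {i j : Fin 7} (hi : i ≠ 6) (hj : j ≠ 6) : σ.SameCycle i j := by
  have c2 : σ.SameCycle 0 2 := h0 ▸ Perm.sameCycle_apply_right.2 (.refl σ 0)
  have c1 : σ.SameCycle 0 1 := h2 ▸ Perm.sameCycle_apply_right.2 c2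
  have c5 : σ.SameCycle 0 5 := h1 ▸ Perm.sameCycle_apply_right.2 c1
  have c3 : σ.SameCycle 0 3 := h5 ▸ Perm.sameCycle_apply_right.2 c5
  have c4 : σ.SameCycle 0 4 := h3 ▸ Perm.sameCycle_apply_right.2 c3
  have from_zero : ∀ k : Fin 7, k ≠ 6 → σ.SameCycle 0 k := by
    intro k hk
    fin_cases k
    exacts [.refl σ 0, c1, c2, c3, c4, c5, absurd rfl hk]
  exact (from_zero i hi).symm.trans (from_zero j hj)

theorem submodules_are_V1_or_V2_general
    (K : Type*) [Field K]
    (ζ : K) (hζ : IsPrimitiveRoot ζ 7)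
    (g : Matrix (Fin 7) (Fin 7) K)
    (hg : g = Matrix.diagonal fun i : Fin 7 => ζ ^ ((i : ℕ) + 1))
    (σ : Equiv.Perm (Fin 7))
    (hσ : σ 0 = 2 ∧ σ 2 = 1 ∧ σ 1 = 5 ∧ σ 5 = 3 ∧ σ 3 = 4 ∧ σ 4 = 0 ∧ σ 6 = 6)
    (d : Fin 7 → K) (hd : ∀ i, d i ≠ 0)
    (h : Matrix (Fin 7) (Fin 7) K)
    (hh : h = (σ.permMatrix K) * Matrix.diagonal d)
    (V₁ : Submodule K (Fin 7 → K))
    (hV₁ : ∀ v : Fin 7 → K, v ∈ V₁ ↔ ∀ i : Fin 7, i ≠ 6 → v i = 0)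
    (V₂ : Submodule K (Fin 7 → K)) (hV₂ : ∀ v : Fin 7 → K, v ∈ V₂ ↔ v 6 = 0) :
    IsCompl V₁ V₂ ∧
    (∀ v ∈ V₁, g.mulVec v ∈ V₁) ∧ (∀ v ∈ V₁, h.mulVec v ∈ V₁) ∧
    (∀ v ∈ V₂, g.mulVec v ∈ V₂) ∧ (∀ v ∈ V₂, h.mulVec v ∈ V₂) ∧
    (∀ U : Submodule K (Fin 7 → K),
      (∀ v ∈ U, g.mulVec v ∈ U) → (∀ v ∈ U, h.mulVec v ∈ U) →
      U ≠ ⊥ → U ≠ ⊤ → U = V₁ ∨ U = V₂) := by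
  obtain ⟨h0, h2, h1, h5, h3, -, h6⟩ := hσ
  obtain rfl : V₁ = Submodule.pi {6}ᶜ fun _ => ⊥ := by ext v; simp [hV₁]
  obtain rfl : V₂ = Submodule.pi {6} fun _ => ⊥ := by ext v; simp [hV₂]
  set D : Fin 7 → K := fun i => ζ ^ ((i : ℕ) + 1)
  have hD : Injective D := fun i j hij => Fin.ext <| hζ.pow_inj i.isLt j.isLt <|
    mul_left_cancel₀ (hζ.ne_zero (by norm_num)) (by simpa only [D, pow_succ'] using hij)
  have hgv (v : Fin 7 → K) : g *ᵥ v = D • v := by ext; simp [hg, mulVec_diagonal, D]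
  have hhv (v : Fin 7 → K) : h *ᵥ v = (d • v) ∘ σ := by
    rw [hh, ← mulVec_mulVec, permMatrix_mulVec]
    ext; simp [mulVec_diagonal]
  have hσ6 : Set.MapsTo σ {6} {6} := by simp [h6]
  have hσ6c : Set.MapsTo σ {6}ᶜ {6}ᶜ := fun i hi hσi => hi (σ.injective (hσi.trans h6.symm))
  refine ⟨Submodule.isCompl_pi_bot_compl _, ?_, ?_, ?_, ?_, ?_⟩
  · exact fun v hv => hgv v ▸ Submodule.smul_mem_pi_bot D hv
  · exact fun v hv => hhv v ▸ Submodule.comp_mem_pi_bot hσ6c (Submodule.smul_mem_pi_bot d hv)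
  · exact fun v hv => hgv v ▸ Submodule.smul_mem_pi_bot D hv
  · exact fun v hv => hhv v ▸ Submodule.comp_mem_pi_bot hσ6 (Submodule.smul_mem_pi_bot d hv)
  intro U hUg hUh hbot htop
  have hU := Submodule.eq_pi_bot_of_forall_smul_mem hD fun v hv => hgv v ▸ hUg v hv
  have hS : ∀ i j, i ≠ 6 → j ≠ 6 →
      i ∈ {i | Pi.single i (1 : K) ∉ U} → j ∈ {i | Pi.single i (1 : K) ∉ U} :=
    fun i j hi hj hiU hjU => hiU <| Submodule.single_mem_of_sameCycle hd
      (fun v hv => hhv v ▸ hUh v hv) (sameCycle_of_ne_six h0 h2 h1 h5 h3 hj hi) hjU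
  rcases Set.eq_empty_or_singleton_or_compl_singleton_or_univ 6 hS with hS | hS | hS | hS <;>
    rw [hS] at hU
  · exact absurd (hU.trans (Submodule.pi_empty _)) htop
  · exact .inr hU
  · exact .inl hU
  · exact absurd (hU.trans Submodule.pi_univ_bot) hbot

/-- In the setting of the previous lemma, with
`H' = ⟨g_∞, h⟩ ≤ GL(V)`, `V = 𝔽̄_ℓ⁷` decomposes as `V₁ ⊕ V₂` with
`V₁ = Eig(g_∞, 1)` one-dimensional and `V₂` the sum of the other eigenspaces,
both `H'`-invariant, and every nonzero proper `H'`-submodule of `V` equals `V₁`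
or `V₂`. -/
theorem submodules_are_V1_or_V2
    (ℓ : ℕ) [Fact ℓ.Prime] (h7 : ℓ ≠ 7)
    (K : Type*) [Field K] [IsAlgClosed K] [CharP K ℓ]
    (ζ : K) (hζ : IsPrimitiveRoot ζ 7)
    (g : Matrix (Fin 7) (Fin 7) K)
    (hg : g = Matrix.diagonal fun i : Fin 7 => ζ ^ ((i : ℕ) + 1))
    (σ : Equiv.Perm (Fin 7))
    (hσ : σ 0 = 2 ∧ σ 2 = 1 ∧ σ 1 = 5 ∧ σ 5 = 3 ∧ σ 3 = 4 ∧ σ 4 = 0 ∧ σ 6 = 6)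
    (d : Fin 7 → K) (hd : ∀ i, d i ≠ 0)
    (h : Matrix (Fin 7) (Fin 7) K)
    (hh : h = (σ.permMatrix K) * Matrix.diagonal d)
    (V₁ : Submodule K (Fin 7 → K))
    (hV₁ : ∀ v : Fin 7 → K, v ∈ V₁ ↔ ∀ i : Fin 7, i ≠ 6 → v i = 0)
    (V₂ : Submodule K (Fin 7 → K)) (hV₂ : ∀ v : Fin 7 → K, v ∈ V₂ ↔ v 6 = 0) :
    IsCompl V₁ V₂ ∧
    (∀ v ∈ V₁, g.mulVec v ∈ V₁) ∧ (∀ v ∈ V₁, h.mulVec v ∈ V₁) ∧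
    (∀ v ∈ V₂, g.mulVec v ∈ V₂) ∧ (∀ v ∈ V₂, h.mulVec v ∈ V₂) ∧
    (∀ U : Submodule K (Fin 7 → K),
      (∀ v ∈ U, g.mulVec v ∈ U) → (∀ v ∈ U, h.mulVec v ∈ U) →
      U ≠ ⊥ → U ≠ ⊤ → U = V₁ ∨ U = V₂) :=
  submodules_are_V1_or_V2_general K ζ hζ g hg σ hσ d hd h hh V₁ hV₁ V₂ hV₂
end

section
/- Let ℓ ≠ 2, 7 be a prime, V = 𝔽_ℓ⁷, and H ≤ GL(V) a subgroup containing g_∞ (diagonalizable with eigenvalues ζ₇,...,ζ₇⁶,1 over 𝔽̄_ℓ), an element h_{∞,p} with h⁻¹g_∞h = g_∞^p for p a primitive root mod 7, and a unipotent element g₁ whose Jordan canonical form has no block of length 1 (type (2,2,3)). Then V is an indecomposable 𝔽_ℓ[H]-module. -/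
/-!
Suppose `F⁷ = U ⊕ W` with `U, W` nonzero and `H`-stable, `F = 𝔽_ℓ`. Over `K`, `g_∞` has the
distinct eigenvalues `ζ, …, ζ⁷ = 1`, so a `g_∞`-stable subspace of `K⁷` is spanned by the
eigenvectors it contains, and `h` carries the `λ`-eigenline to the `λ^p`-eigenline. As `p`
generates `(ℤ/7)ˣ`, a subspace stable under both that contains one eigenline for an eigenvalue
`≠ 1` contains all six of them. The `K`-spans of `U` and `W` have the same dimensions as `U`
and `W`, so one of `U`, `W` is a line. The nilpotent `N = g₁ - 1` kills that line, which
therefore lies in `ker N ⊆ im N` (there is no Jordan block of length one, as the ranks `4` and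
`1` of `N` and `N²` show); but `im N` lies in the other summand.
-/

open Module Polynomial Submodule Finset Matrix

namespace ZMod

variable {q : ℕ} [hq : Fact q.Prime]

theorem orderOf_natCast_eq_sub_one {p : ℕ} (hp : ∀ k, 0 < k → k < q - 1 → p ^ k % q ≠ 1)
    (hpq : p % q ≠ 0) : orderOf (p : ZMod q) = q - 1 := by
  refine (orderOf_eq_iff (Nat.sub_pos_of_lt hq.out.one_lt)).mpr
    ⟨pow_card_sub_one_eq_one ?_, fun k hk hk0 h => hp k hk0 hk ?_⟩
  · rwa [Ne, natCast_eq_zero_iff, Nat.dvd_iff_mod_eq_zero]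
  · rwa [← Nat.cast_pow, ← Nat.cast_one, natCast_eq_natCast_iff',
      Nat.mod_eq_of_lt hq.out.one_lt] at h

theorem exists_pow_eq_of_orderOf_eq {a : ZMod q} (ha : orderOf a = q - 1) {y : ZMod q}
    (hy : y ≠ 0) : ∃ m : ℕ, a ^ m = y := by
  have ha0 : a ≠ 0 := by
    rintro rfl
    have := hq.out.two_le
    simp at ha
    omega
  have htop : Subgroup.zpowers (Units.mk0 a ha0) = ⊤ := by
    rw [← Subgroup.card_eq_iff_eq_top, Nat.card_zpowers, ← orderOf_units, Units.val_mk0, ha,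
      Nat.card_eq_fintype_card, card_units]
  obtain ⟨m, hm⟩ := mem_powers_iff_mem_zpowers.mpr (htop ▸ Subgroup.mem_top (Units.mk0 y hy))
  exact ⟨m, by simpa using congrArg Units.val hm⟩

end ZMod

theorem Finset.card_le_one_or_sub_one_le_of_pow_mem {K : Type*} [CommRing K] [IsDomain K]
    {q p : ℕ} [hq : Fact q.Prime] (hp : orderOf (p : ZMod q) = q - 1) {s : Finset K}
    (hs : s ⊆ nthRootsFinset q (1 : K)) (hsp : ∀ x ∈ s, x ^ p ∈ s) :
    #s ≤ 1 ∨ q - 1 ≤ #s := by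
  classical
  by_cases h1 : s ⊆ {1}
  · exact .inl ((card_le_card h1).trans (card_singleton 1).le)
  obtain ⟨x, hxs, hx1⟩ := not_subset.mp h1
  have hx : IsPrimitiveRoot x q :=
    isPrimitiveRoot_of_mem_nthRootsFinset hq.out (hs hxs) (by simpa using hx1)
  have hpow (m : ℕ) : x ^ p ^ m ∈ s := by
    induction m with
    | zero => simpa using hxs
    | succ m ih => rw [pow_succ, pow_mul]; exact hsp _ ih
  refine .inr ?_
  calc q - 1 = #(primitiveRoots q K) := by rw [hx.card_primitiveRoots, Nat.totient_prime hq.out]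
    _ ≤ #s := card_le_card fun η hη => ?_
  obtain ⟨j, hjq, rfl⟩ :=
    hx.eq_pow_of_pow_eq_one ((mem_primitiveRoots hq.out.pos).mp hη).pow_eq_one
  have hj : (j : ZMod q) ≠ 0 := by
    intro hj
    obtain rfl : j = 0 := Nat.eq_zero_of_dvd_of_lt ((ZMod.natCast_eq_zero_iff _ _).mp hj) hjq
    rw [pow_zero, mem_primitiveRoots hq.out.pos, IsPrimitiveRoot.one_left_iff] at hη
    exact hq.out.one_lt.ne' hη
  obtain ⟨m, hm⟩ := ZMod.exists_pow_eq_of_orderOf_eq hp hj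
  have hmod : p ^ m % q = j % q := by rw [← ZMod.natCast_eq_natCast_iff', Nat.cast_pow, hm]
  rw [← pow_mod_orderOf x j, ← hx.eq_orderOf, ← hmod, hx.eq_orderOf, pow_mod_orderOf]
  exact hpow m

namespace Module.Basis

variable {ι K V : Type*} [Field K] [AddCommGroup V] [Module K V]
  {f : End K V} {b : Basis ι K V} {μ : ι → K}

theorem repr_aeval_of_apply_eq_smul (hb : ∀ i, f (b i) = μ i • b i) (q : K[X]) (x : V)
    (i : ι) : b.repr (aeval f q x) i = q.eval (μ i) * b.repr x i := by
  have : (b.coord i).comp (aeval f q) = q.eval (μ i) • b.coord i := by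
    refine b.ext fun j => ?_
    rw [LinearMap.comp_apply, End.aeval_apply_of_mem_apply_eq_smul (hb j), map_smul]
    by_cases hij : i = j
    · subst hij; simp
    · simp [hij]
  simpa using LinearMap.congr_fun this x

/-- The Lagrange polynomial `∏_{k ≠ i} (X - μ k)` of `f` projects `x` onto the `i`-th
eigenline. -/
theorem mem_of_repr_ne_zero [Fintype ι] (hb : ∀ i, f (b i) = μ i • b i)
    (hμ : Function.Injective μ) {S : Submodule K V} (hS : S ∈ f.invtSubmodule) {x : V}
    (hx : x ∈ S) {i : ι} (hi : b.repr x i ≠ 0) : b i ∈ S := by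
  classical
  set q : K[X] := ∏ k ∈ univ.erase i, (X - C (μ k))
  have hq (k : ι) : q.eval (μ k) = 0 ↔ k ≠ i := by
    simp only [q, eval_prod, eval_sub, eval_X, eval_C, prod_eq_zero_iff, mem_erase, mem_univ,
      and_true, sub_eq_zero, hμ.eq_iff]
    exact ⟨fun ⟨_, hji, hkj⟩ => hkj ▸ hji, fun hki => ⟨k, hki, rfl⟩⟩
  have hqx : aeval f q x = (q.eval (μ i) * b.repr x i) • b i := by
    refine b.repr.injective (Finsupp.ext fun k => ?_)
    rw [repr_aeval_of_apply_eq_smul hb, map_smul, repr_self, Finsupp.smul_apply,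
      Finsupp.single_apply]
    by_cases hki : i = k
    · subst hki; simp
    · simp [(hq k).mpr (Ne.symm hki), hki]
  have := S.smul_mem (q.eval (μ i) * b.repr x i)⁻¹ (aeval_apply_smul_mem_of_le_comap hx q f hS)
  rwa [hqx, smul_smul, inv_mul_cancel₀ (mul_ne_zero (mt (hq i).mp (not_not.mpr rfl)) hi),
    one_smul] at this

open scoped Classical in
theorem finrank_eq_card_mem [Fintype ι] (hb : ∀ i, f (b i) = μ i • b i)
    (hμ : Function.Injective μ) {S : Submodule K V} (hS : S ∈ f.invtSubmodule) :
    finrank K S = #{i | b i ∈ S} := by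
  have hspan : S = span K (Set.range (b ∘ ((↑) : {i // b i ∈ S} → ι))) := by
    refine le_antisymm (fun x hx => ?_) (span_le.mpr (Set.range_subset_iff.mpr fun i => i.2))
    rw [← b.linearCombination_repr x, Finsupp.linearCombination_apply]
    refine sum_mem fun i hi => smul_mem _ _ (subset_span ⟨⟨i, ?_⟩, rfl⟩)
    exact mem_of_repr_ne_zero hb hμ hS hx (Finsupp.mem_support_iff.mp hi)
  conv_lhs => rw [hspan]
  rw [finrank_span_eq_card (b.linearIndependent.comp _ Subtype.val_injective),
    Fintype.card_subtype]

theorem exists_mem_eq_of_hasEigenvector [Fintype ι] (hb : ∀ i, f (b i) = μ i • b i)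
    (hμ : Function.Injective μ) {S : Submodule K V} (hS : S ∈ f.invtSubmodule) {c : K} {x : V}
    (hx : f.HasEigenvector c x) (hxS : x ∈ S) : ∃ i, b i ∈ S ∧ μ i = c := by
  obtain ⟨i, hi⟩ : ∃ i, b.repr x i ≠ 0 := by
    by_contra! h
    exact hx.2 (b.repr.injective (Finsupp.ext fun i => by simp [h i]))
  refine ⟨i, mem_of_repr_ne_zero hb hμ hS hxS hi, mul_right_cancel₀ hi ?_⟩
  have := repr_aeval_of_apply_eq_smul hb X x i
  rwa [aeval_X, End.mem_eigenspace_iff.mp hx.1, map_smul, Finsupp.smul_apply, smul_eq_mul,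
    eval_X, eq_comm] at this

end Module.Basis

namespace Module.End

variable {K V : Type*} [Field K] [AddCommGroup V] [Module K V]

theorem HasEigenvector.apply_of_mul_eq_mul_pow {f h : End K V} {p : ℕ}
    (hfh : f * h = h * f ^ p) (hinj : Function.Injective h) {c : K} {x : V}
    (hx : f.HasEigenvector c x) : f.HasEigenvector (c ^ p) (h x) := by
  refine ⟨mem_eigenspace_iff.mpr ?_, (map_ne_zero_iff h hinj).mpr hx.2⟩
  have := aeval_apply_of_hasEigenvector (p := X ^ p) hx
  rw [map_pow, aeval_X, eval_pow, eval_X] at this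
  rw [← mul_apply, hfh, mul_apply, this, map_smul]

theorem finrank_le_one_or_sub_one_le {ι : Type*} [Fintype ι] {q p : ℕ} [hq : Fact q.Prime]
    (hp : orderOf (p : ZMod q) = q - 1) {f h : End K V} (hfh : f * h = h * f ^ p)
    (hinj : Function.Injective h) {b : Basis ι K V} {μ : ι → K}
    (hb : ∀ i, f (b i) = μ i • b i) (hμ : Function.Injective μ) (hμq : ∀ i, μ i ^ q = 1)
    {S : Submodule K V} (hSf : S ∈ f.invtSubmodule) (hSh : S ∈ h.invtSubmodule) :
    finrank K S ≤ 1 ∨ q - 1 ≤ finrank K S := by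
  classical
  rw [b.finrank_eq_card_mem hb hμ hSf, ← card_image_of_injective _ hμ]
  refine card_le_one_or_sub_one_le_of_pow_mem hp (fun c hc => ?_) (fun c hc => ?_)
  · obtain ⟨i, -, rfl⟩ := mem_image.mp hc
    exact (mem_nthRootsFinset hq.out.pos _).mpr (hμq i)
  · obtain ⟨i, hi, rfl⟩ := mem_image.mp hc
    have hev : f.HasEigenvector (μ i) (b i) := ⟨mem_eigenspace_iff.mpr (hb i), b.ne_zero i⟩
    obtain ⟨j, hj, hjμ⟩ := b.exists_mem_eq_of_hasEigenvector hb hμ hSf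
      (hev.apply_of_mul_eq_mul_pow hfh hinj) (hSh (mem_filter.mp hi).2)
    exact mem_image.mpr ⟨j, mem_filter.mpr ⟨mem_univ j, hj⟩, hjμ⟩

theorem le_ker_of_isNilpotent_of_finrank_eq_one {f : End K V} (hf : IsNilpotent f)
    {U : Submodule K V} (hU : U ∈ f.invtSubmodule) (hU1 : finrank K U = 1) :
    U ≤ LinearMap.ker f := by
  obtain ⟨u, huU, hu0⟩ := U.exists_mem_ne_zero_of_ne_bot (by rintro rfl; simp at hU1)
  have hspan := eq_span_singleton_of_mem_of_finrank_eq_one hU1 huU hu0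
  obtain ⟨c, hc⟩ := mem_span_singleton.mp (hspan ▸ hU huU : f u ∈ K ∙ u)
  have hev : f.HasEigenvector c u := ⟨mem_eigenspace_iff.mpr hc.symm, hu0⟩
  have hc0 : c = 0 := ((hasEigenvalue_of_hasEigenvector hev).isNilpotent_of_isNilpotent hf).eq_zero
  rw [hspan, span_singleton_le_iff_mem, LinearMap.mem_ker, ← hc, hc0, zero_smul]

theorem eq_bot_of_isCompl_of_le_ker {f : End K V} (hf : LinearMap.ker f ≤ LinearMap.range f)
    {U W : Submodule K V} (hUW : IsCompl U W) (hW : W ∈ f.invtSubmodule)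
    (hU : U ≤ LinearMap.ker f) : U = ⊥ := by
  have hrange : LinearMap.range f ≤ W := by
    rintro _ ⟨x, rfl⟩
    obtain ⟨u, hu, w, hw, rfl⟩ := mem_sup.mp (hUW.sup_eq_top ▸ mem_top : x ∈ U ⊔ W)
    rw [map_add, hU hu, zero_add]
    exact hW hw
  exact hUW.disjoint.eq_bot_of_le (hU.trans (hf.trans hrange))

theorem finrank_ne_one_of_isCompl {f : End K V} (hf : IsNilpotent f)
    (hker : LinearMap.ker f ≤ LinearMap.range f) {U W : Submodule K V} (hUW : IsCompl U W)
    (hU : U ∈ f.invtSubmodule) (hW : W ∈ f.invtSubmodule) : finrank K U ≠ 1 := fun hU1 => by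
  obtain rfl := eq_bot_of_isCompl_of_le_ker hker hUW hW
    (le_ker_of_isNilpotent_of_finrank_eq_one hf hU hU1)
  simp at hU1

end Module.End

namespace LinearMap

variable {K V : Type*} [Field K] [AddCommGroup V] [Module K V] [FiniteDimensional K V]

theorem finrank_range_eq_finrank_range_comp_add (f : V →ₗ[K] V) :
    finrank K (range f) = finrank K (range (f ∘ₗ f)) + finrank K ↥(ker f ⊓ range f) := by
  have := finrank_range_add_finrank_ker (f.domRestrict (range f))
  rwa [range_domRestrict, ← range_comp, ker_domRestrict, ← finrank_map_subtype_eq,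
    map_comap_subtype, inf_comm, eq_comm] at this

theorem ker_le_range_of_finrank_ker_add_le (f : V →ₗ[K] V)
    (h : finrank K (ker f) + finrank K (range (f ∘ₗ f)) ≤ finrank K (range f)) :
    ker f ≤ range f := by
  have := f.finrank_range_eq_finrank_range_comp_add
  exact inf_eq_left.mp (eq_of_le_of_finrank_le inf_le_left (by omega))

end LinearMap

section BaseChange

variable {F K : Type*} [Field F] [Field K]

namespace Submodule

variable {M N : Type*} [AddCommGroup M] [Module F M] [AddCommGroup N] [Module K N] [Module F N]
  (φ : M →ₗ[F] N)

theorem finrank_span_image_le [Algebra F K] [IsScalarTower F K N] (p : Submodule F M)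
    [FiniteDimensional F p] : finrank K (span K (φ '' p)) ≤ finrank F p := by
  set b := finBasis F p
  have hp : span F (Set.range fun i => (b i : M)) = p := by
    rw [Set.range_comp', ← p.coe_subtype, span_image, b.span_eq, map_top, range_subtype]
  calc finrank K (span K (φ '' p)) = finrank K (span K (Set.range fun i => φ (b i))) := by
        conv_lhs => rw [← hp, ← map_coe, map_span, span_span_of_tower, ← Set.range_comp]
        rfl
    _ ≤ finrank F p := (finrank_range_le_card _).trans (Fintype.card_fin _).le

theorem span_image_mem_invtSubmodule {a : End F M} {a' : End K N} (h : ∀ x, a' (φ x) = φ (a x))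
    {p : Submodule F M} (hp : p ∈ a.invtSubmodule) : span K (φ '' p) ∈ a'.invtSubmodule := by
  rw [End.mem_invtSubmodule_iff_map_le, map_span, span_le]
  rintro _ ⟨_, ⟨x, hx, rfl⟩, rfl⟩
  exact h x ▸ subset_span ⟨a x, hp hx, rfl⟩

theorem span_image_sup (p q : Submodule F M) :
    span K (φ '' ↑(p ⊔ q)) = span K (φ '' p) ⊔ span K (φ '' q) := by
  refine le_antisymm (span_le.mpr ?_)
    (sup_le (span_mono (Set.image_mono (SetLike.coe_mono le_sup_left)))
      (span_mono (Set.image_mono (SetLike.coe_mono le_sup_right))))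
  rintro _ ⟨_, hx, rfl⟩
  obtain ⟨y, hy, z, hz, rfl⟩ := mem_sup.mp hx
  rw [map_add]
  exact add_mem_sup (subset_span ⟨y, hy, rfl⟩) (subset_span ⟨z, hz, rfl⟩)

variable [Algebra F K] {ι : Type*} [Fintype ι] [DecidableEq ι]

theorem span_range_compLeft : span K (Set.range ((Algebra.linearMap F K).compLeft ι)) = ⊤ := by
  rw [eq_top_iff, ← (Pi.basisFun K ι).span_eq, span_le]
  rintro _ ⟨i, rfl⟩
  refine subset_span ⟨Pi.single i 1, funext fun j => ?_⟩
  by_cases hij : j = i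
  · subst hij; simp
  · simp [hij]

/-- The bound `finrank_span_image_le` is an equality for both summands, since together their
spans fill `K^ι`. -/
theorem finrank_span_compLeft_image_of_isCompl {U W : Submodule F (ι → F)} (hUW : IsCompl U W) :
    finrank K (span K ((Algebra.linearMap F K).compLeft ι '' U)) = finrank F U := by
  have hle := finrank_span_image_le (K := K) ((Algebra.linearMap F K).compLeft ι)
  have hsum := finrank_add_eq_of_isCompl hUW
  have hsup := finrank_add_le_finrank_add_finrank
    (span K ((Algebra.linearMap F K).compLeft ι '' U))
    (span K ((Algebra.linearMap F K).compLeft ι '' W))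
  rw [← span_image_sup, hUW.sup_eq_top, top_coe, Set.image_univ, span_range_compLeft,
    finrank_top, finrank_pi] at hsup
  rw [finrank_pi] at hsum
  have := hle U
  have := hle W
  omega

end Submodule

theorem Matrix.toLin'_map_compLeft [Algebra F K] {ι : Type*} [Fintype ι] [DecidableEq ι]
    (A : Matrix ι ι F) (v : ι → F) :
    toLin' (A.map (algebraMap F K)) ((Algebra.linearMap F K).compLeft ι v) =
      (Algebra.linearMap F K).compLeft ι (toLin' A v) :=
  funext fun i => (RingHom.map_mulVec _ A v i).symm

end BaseChange

namespace Matrix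

theorem exists_basis_toLin'_apply_eq_smul {n K : Type*} [Fintype n] [DecidableEq n]
    [Field K] {A : Matrix n n K} {P : GL n K} {d : n → K}
    (hA : A = (P : Matrix n n K) * diagonal d * ((P⁻¹ : GL n K) : Matrix n n K)) :
    ∃ b : Basis n K (n → K), ∀ i, toLin' A (b i) = d i • b i := by
  refine ⟨(Pi.basisFun K n).map (GeneralLinearGroup.toLin P).toLinearEquiv, fun i => ?_⟩
  have hAP : A * P = P * diagonal d := by
    rw [hA, Matrix.mul_assoc, ← GeneralLinearGroup.coe_mul, inv_mul_cancel,
      GeneralLinearGroup.coe_one, Matrix.mul_one]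
  rw [Basis.map_apply, Pi.basisFun_apply]
  change A *ᵥ ((P : Matrix n n K) *ᵥ Pi.single i 1) =
    d i • ((P : Matrix n n K) *ᵥ Pi.single i 1)
  rw [mulVec_mulVec, hAP, ← mulVec_mulVec, diagonal_mulVec_single, mul_one, ← mulVec_smul,
    ← Pi.single_smul, smul_eq_mul, mul_one]

theorem ker_toLin'_le_range_toLin' {n K : Type*} [Fintype n] [DecidableEq n] [Field K]
    (A : Matrix n n K) (h : Fintype.card n + (A ^ 2).rank ≤ 2 * A.rank) :
    LinearMap.ker (toLin' A) ≤ LinearMap.range (toLin' A) := by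
  refine LinearMap.ker_le_range_of_finrank_ker_add_le _ ?_
  have hrank := LinearMap.finrank_range_add_finrank_ker (toLin' A)
  rw [finrank_fintype_fun_eq_card] at hrank
  rw [← toLin'_mul, ← pow_two]
  change _ + (A ^ 2).rank ≤ A.rank
  change A.rank + _ = _ at hrank
  omega

end Matrix

theorem finrank_le_one_or_sub_one_le_of_isCompl {F K ι : Type*} [Field F] [Field K]
    [Algebra F K] [Fintype ι] [DecidableEq ι] {q p : ℕ} [Fact q.Prime]
    (hp : orderOf (p : ZMod q) = q - 1) {g h : GL ι F} {P : GL ι K} {d : ι → K}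
    (hd : Function.Injective d) (hdq : ∀ i, d i ^ q = 1)
    (hg : (g : Matrix ι ι F).map (algebraMap F K) =
      (P : Matrix ι ι K) * diagonal d * ((P⁻¹ : GL ι K) : Matrix ι ι K))
    (hconj : h⁻¹ * g * h = g ^ p) {U W : Submodule F (ι → F)} (hUW : IsCompl U W)
    (hUg : U ∈ End.invtSubmodule (toLin' (g : Matrix ι ι F)))
    (hUh : U ∈ End.invtSubmodule (toLin' (h : Matrix ι ι F))) :
    finrank F U ≤ 1 ∨ q - 1 ≤ finrank F U := by
  let ρ : GL ι F →* End K (ι → K) :=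
    (toLinAlgEquiv' : Matrix ι ι K ≃ₐ[K] _).toMonoidHom.comp
      ((Units.coeHom _).comp (GeneralLinearGroup.map (algebraMap F K)))
  have hrel : ρ g * ρ h = ρ h * ρ g ^ p := by
    rw [← map_mul, ← map_pow, ← map_mul, ← hconj]
    group
  obtain ⟨b, hb⟩ := exists_basis_toLin'_apply_eq_smul hg
  rw [← finrank_span_compLeft_image_of_isCompl (K := K) hUW]
  refine End.finrank_le_one_or_sub_one_le hp hrel
    ((End.isUnit_iff _).mp ((Group.isUnit h).map ρ)).injective hb hd hdq ?_ ?_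
  · exact span_image_mem_invtSubmodule _ (toLin'_map_compLeft _) hUg
  · exact span_image_mem_invtSubmodule _ (toLin'_map_compLeft _) hUh

theorem V_indecomposable_general
    (ℓ p : ℕ) [Fact ℓ.Prime]
    (hp : ∀ k : ℕ, 0 < k → k < 6 → p ^ k % 7 ≠ 1) (hp7 : p % 7 ≠ 0)
    (K : Type*) [Field K] [Algebra (ZMod ℓ) K]
    (ζ : K) (hζ : IsPrimitiveRoot ζ 7)
    (H : Subgroup (GL (Fin 7) (ZMod ℓ)))
    (gInf h g₁ : GL (Fin 7) (ZMod ℓ))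
    (hgInfH : gInf ∈ H) (hhH : h ∈ H) (hg₁H : g₁ ∈ H)
    (hdiag : ∃ P : GL (Fin 7) K,
      ((gInf : Matrix (Fin 7) (Fin 7) (ZMod ℓ)).map (algebraMap (ZMod ℓ) K))
        = (P : Matrix (Fin 7) (Fin 7) K) *
            Matrix.diagonal (fun i : Fin 7 => ζ ^ ((i : ℕ) + 1)) *
            ((P⁻¹ : GL (Fin 7) K) : Matrix (Fin 7) (Fin 7) K))
    (hconj : h⁻¹ * gInf * h = gInf ^ p)
    (hu : ((g₁ : Matrix (Fin 7) (Fin 7) (ZMod ℓ)) - 1) ^ 3 = 0)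
    (hrk1 : ((g₁ : Matrix (Fin 7) (Fin 7) (ZMod ℓ)) - 1).rank = 4)
    (hrk2 : (((g₁ : Matrix (Fin 7) (Fin 7) (ZMod ℓ)) - 1) ^ 2).rank = 1) :
    ¬ ∃ U W : Submodule (ZMod ℓ) (Fin 7 → ZMod ℓ),
      U ≠ ⊥ ∧ W ≠ ⊥ ∧ U ⊓ W = ⊥ ∧ U ⊔ W = ⊤ ∧
      (∀ g ∈ H, ∀ v ∈ U, (g : Matrix (Fin 7) (Fin 7) (ZMod ℓ)).mulVec v ∈ U) ∧
      (∀ g ∈ H, ∀ v ∈ W, (g : Matrix (Fin 7) (Fin 7) (ZMod ℓ)).mulVec v ∈ W) := by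
  rintro ⟨U, W, hU0, hW0, hUW, hUWtop, hUH, hWH⟩
  have hUW : IsCompl U W := ⟨disjoint_iff.mpr hUW, codisjoint_iff.mpr hUWtop⟩
  obtain ⟨P, hP⟩ := hdiag
  have hd : Function.Injective fun i : Fin 7 => ζ ^ ((i : ℕ) + 1) := fun i j hij =>
    Fin.ext (hζ.pow_inj i.2 j.2
      (mul_right_cancel₀ (hζ.ne_zero (by norm_num)) (by simpa only [pow_succ] using hij)))
  have hdq (i : Fin 7) : (ζ ^ ((i : ℕ) + 1)) ^ 7 = 1 := by
    rw [← pow_mul, mul_comm, pow_mul, hζ.pow_eq_one, one_pow]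
  have : Fact (Nat.Prime 7) := ⟨by norm_num⟩
  have hdim := finrank_le_one_or_sub_one_le_of_isCompl (ZMod.orderOf_natCast_eq_sub_one hp hp7)
    hd hdq hP hconj hUW (hUH _ hgInfH) (hUH _ hhH)
  have hsum := finrank_add_eq_of_isCompl hUW
  rw [finrank_fin_fun] at hsum
  have hU := mt Submodule.finrank_eq_zero.mp hU0
  have hW := mt Submodule.finrank_eq_zero.mp hW0
  set N := toLin' ((g₁ : Matrix (Fin 7) (Fin 7) (ZMod ℓ)) - 1)
  have hN : IsNilpotent N := ⟨3, by rw [← toLin'_pow, hu, map_zero]⟩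
  have hker := ker_toLin'_le_range_toLin' _ (by rw [hrk1, hrk2]; rfl)
  have hUN : U ∈ End.invtSubmodule N := fun v hv => by
    simpa [N, sub_mulVec] using U.sub_mem (hUH _ hg₁H v hv) hv
  have hWN : W ∈ End.invtSubmodule N := fun v hv => by
    simpa [N, sub_mulVec] using W.sub_mem (hWH _ hg₁H v hv) hv
  obtain h1 | h1 : finrank (ZMod ℓ) U = 1 ∨ finrank (ZMod ℓ) W = 1 := by omega
  · exact End.finrank_ne_one_of_isCompl hN hker hUW hUN hWN h1
  · exact End.finrank_ne_one_of_isCompl hN hker hUW.symm hWN hUN h1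

/-- Let `ℓ ≠ 2,7`, `V = 𝔽_ℓ⁷`, and `H ≤ GL(V)` containing `g_∞`
(diagonalizable over `𝔽̄_ℓ` with eigenvalues `ζ₇, ..., ζ₇⁶, 1`), an element
`h` with `h⁻¹ g_∞ h = g_∞^p` for `p` a primitive root mod `7`, and a unipotent
`g₁` of Jordan type `(2,2,3)` (no block of length 1). Then `V` is an
indecomposable `𝔽_ℓ[H]`-module. -/
theorem V_indecomposable
    (ℓ p : ℕ) [Fact ℓ.Prime] [Fact p.Prime] (h2 : ℓ ≠ 2) (h7 : ℓ ≠ 7)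
    (hp : ∀ k : ℕ, 0 < k → k < 6 → p ^ k % 7 ≠ 1) (hp7 : p % 7 ≠ 0)
    (K : Type*) [Field K] [IsAlgClosed K] [CharP K ℓ] [Algebra (ZMod ℓ) K]
    (ζ : K) (hζ : IsPrimitiveRoot ζ 7)
    (H : Subgroup (GL (Fin 7) (ZMod ℓ)))
    (gInf h g₁ : GL (Fin 7) (ZMod ℓ))
    (hgInfH : gInf ∈ H) (hhH : h ∈ H) (hg₁H : g₁ ∈ H)
    (hdiag : ∃ P : GL (Fin 7) K,
      ((gInf : Matrix (Fin 7) (Fin 7) (ZMod ℓ)).map (algebraMap (ZMod ℓ) K))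
        = (P : Matrix (Fin 7) (Fin 7) K) *
            Matrix.diagonal (fun i : Fin 7 => ζ ^ ((i : ℕ) + 1)) *
            ((P⁻¹ : GL (Fin 7) K) : Matrix (Fin 7) (Fin 7) K))
    (hconj : h⁻¹ * gInf * h = gInf ^ p)
    (hu : ((g₁ : Matrix (Fin 7) (Fin 7) (ZMod ℓ)) - 1) ^ 3 = 0)
    (hrk1 : ((g₁ : Matrix (Fin 7) (Fin 7) (ZMod ℓ)) - 1).rank = 4)
    (hrk2 : (((g₁ : Matrix (Fin 7) (Fin 7) (ZMod ℓ)) - 1) ^ 2).rank = 1) :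
    ¬ ∃ U W : Submodule (ZMod ℓ) (Fin 7 → ZMod ℓ),
      U ≠ ⊥ ∧ W ≠ ⊥ ∧ U ⊓ W = ⊥ ∧ U ⊔ W = ⊤ ∧
      (∀ g ∈ H, ∀ v ∈ U, (g : Matrix (Fin 7) (Fin 7) (ZMod ℓ)).mulVec v ∈ U) ∧
      (∀ g ∈ H, ∀ v ∈ W, (g : Matrix (Fin 7) (Fin 7) (ZMod ℓ)).mulVec v ∈ W) :=
  V_indecomposable_general ℓ p hp hp7 K ζ hζ H gInf h g₁ hgInfH hhH hg₁H hdiag hconj hu hrk1 hrk2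
end
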